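/- arXiv:2512.07028 — 2 statements merged into one kernel-verified Lean document; each statement's English description precedes it below -/
import Mathlib

section
/- For all x, y > 0 and every integer m ≥ 2, ln G⋆(x,y) = ∑_{k=1}^{m-1} (1/k)((x-y)/2)^{2k} ζ(2k, 1+(x+y)/2) + R, where the remainder R satisfies 0 ≤ R ≤ (1/m)((x-y)/2)^{2m} ∑_{n=1}^∞ 1/((n+x)^m (n+y)^m). -/
/-!
Euler's limit formula for `Γ` gives, for `c ± d > 0`, the product
`Γ(c + d) Γ(c - d) / Γ(c)² = ∏ⱼ (1 - u_j)⁻¹` with `u_j = d² / (c + j)²`; `G⋆(x, y)` is the case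
`c = 1 + (x + y) / 2`, `d = (x - y) / 2`. Expanding every `-log (1 - u_j)` as `∑ₖ u_jᵏ / k`, the
powers `k < m` summed over `j` give the Hurwitz zeta terms. What is left of each logarithmic series
is nonnegative and at most `u^m / (m (1 - u))`, and `u_j^m / (1 - u_j) ≤ d^{2m} / ((c + j)² - d²)^m`
because `(c + j)² - d² ≤ (c + j)²`; finally `(c + j)² - d² = (1 + x + j) (1 + y + j)`.
-/

/-- Hurwitz zeta at positive even integer arguments, as a real series. -/
noncomputable def hurwitzZetaNat (s : ℕ) (a : ℝ) : ℝ := ∑' m : ℕ, 1 / ((m : ℝ) + a) ^ s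

open Filter Finset Topology

lemma div_pow_succ_div_div_le {K : Type*} [Field K] [LinearOrder K] [IsStrictOrderedRing K]
    {e p q : K} (he : 0 ≤ e) (hp : 0 < p) (hpq : p ≤ q) (n : ℕ) :
    (e / q) ^ (n + 1) / (p / q) ≤ e ^ (n + 1) / p ^ (n + 1) := by
  have hq : 0 < q := hp.trans_le hpq
  calc (e / q) ^ (n + 1) / (p / q) = e ^ (n + 1) / (q ^ n * p) := by
        rw [div_pow, pow_succ q]
        field_simp
    _ ≤ e ^ (n + 1) / (p ^ n * p) := by gcongr
    _ = e ^ (n + 1) / p ^ (n + 1) := by rw [← pow_succ]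

namespace Real

lemma summable_one_div_nat_add_pow {c : ℝ} (hc : 0 ≤ c) {k : ℕ} (hk : 1 < k) :
    Summable fun j : ℕ => 1 / ((j : ℝ) + c) ^ k := by
  refine ((summable_one_div_nat_add_rpow c k).2 (by exact_mod_cast hk)).congr fun j => ?_
  rw [abs_of_nonneg (by positivity), rpow_natCast]

lemma summable_one_div_pow_mul_pow {x y : ℝ} (hx : 0 ≤ x) (hy : 0 ≤ y) {m : ℕ} (hm : m ≠ 0) :
    Summable fun j : ℕ => 1 / ((((j : ℝ) + 1) + x) ^ m * (((j : ℝ) + 1) + y) ^ m) := by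
  refine (summable_one_div_nat_add_pow zero_le_one (k := 2 * m) (by omega)).of_nonneg_of_le
    (fun j => by positivity) fun j => ?_
  rw [two_mul, pow_add]
  gcongr 1 / (?_ ^ _ * ?_ ^ _) <;> linarith

lemma hasSum_pow_div_hurwitzZetaNat {c : ℝ} (hc : 0 ≤ c) (d : ℝ) {k : ℕ} (hk : 1 ≤ k) :
    HasSum (fun j : ℕ => (d ^ 2 / (c + j) ^ 2) ^ k / k)
      (1 / k * d ^ (2 * k) * hurwitzZetaNat (2 * k) c) := by
  refine ((summable_one_div_nat_add_pow hc (k := 2 * k) (by omega)).hasSum.mul_left _).congr_fun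
    fun j => ?_
  rw [div_pow, ← pow_mul, ← pow_mul, add_comm (j : ℝ)]
  ring

lemma hasSum_pow_div_log_tail {u : ℝ} (hu : |u| < 1) (n : ℕ) :
    HasSum (fun i : ℕ => u ^ (i + n + 1) / (i + n + 1))
      (-log (1 - u) - ∑ k ∈ Icc 1 n, u ^ k / k) := by
  have hsum : ∑ k ∈ Icc 1 n, u ^ k / k = ∑ i ∈ range n, u ^ (i + 1) / (i + 1) := by
    rw [← Ico_add_one_right_eq_Icc, sum_Ico_eq_sum_range]
    simp [add_comm]
  rw [hsum]
  simpa [add_assoc] using (hasSum_nat_add_iff' n).2 (hasSum_pow_div_log_of_abs_lt_one hu)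

lemma sum_Icc_pow_div_le_neg_log_one_sub {u : ℝ} (hu₀ : 0 ≤ u) (hu₁ : u < 1) (n : ℕ) :
    ∑ k ∈ Icc 1 n, u ^ k / k ≤ -log (1 - u) := by
  have hu : |u| < 1 := by rwa [abs_of_nonneg hu₀]
  exact sub_nonneg.1 <| (hasSum_pow_div_log_tail hu n).nonneg fun i => by positivity

lemma neg_log_one_sub_sub_sum_Icc_le {u : ℝ} (hu₀ : 0 ≤ u) (hu₁ : u < 1) (n : ℕ) :
    -log (1 - u) - ∑ k ∈ Icc 1 n, u ^ k / k ≤ u ^ (n + 1) / (n + 1) * (1 - u)⁻¹ := by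
  have hu : |u| < 1 := by rwa [abs_of_nonneg hu₀]
  refine hasSum_le (fun i => ?_) (hasSum_pow_div_log_tail hu n)
    ((hasSum_geometric_of_lt_one hu₀ hu₁).mul_left (u ^ (n + 1) / (n + 1)))
  calc u ^ (i + n + 1) / (i + n + 1) ≤ u ^ (i + n + 1) / (n + 1) := by
        gcongr; linarith [i.cast_nonneg (α := ℝ)]
    _ = u ^ (n + 1) / (n + 1) * u ^ i := by ring

section

variable {c d : ℝ}

lemma sq_div_add_sq_lt_one (h₁ : 0 < c + d) (h₂ : 0 < c - d) {t : ℝ} (ht : 0 ≤ t) :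
    d ^ 2 / (c + t) ^ 2 < 1 := by
  rw [div_lt_one (by nlinarith)]
  nlinarith

lemma GammaSeq_mul_GammaSeq_div_sq (h₁ : 0 < c + d) (h₂ : 0 < c - d) {n : ℕ} (hn : n ≠ 0) :
    GammaSeq (c + d) n * GammaSeq (c - d) n / GammaSeq c n ^ 2 =
      ∏ j ∈ range (n + 1), (1 - d ^ 2 / (c + j) ^ 2)⁻¹ := by
  have hc : 0 < c := by linarith
  have hN : (0 : ℝ) < n := by positivity
  have hrpow : (n : ℝ) ^ (c + d) * (n : ℝ) ^ (c - d) = ((n : ℝ) ^ c) ^ 2 := by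
    rw [← rpow_add hN, ← rpow_natCast, ← rpow_mul hN.le]
    ring_nf
  have hfactor : ∀ j : ℕ,
      (1 - d ^ 2 / (c + j) ^ 2)⁻¹ = (c + j) ^ 2 / ((c + d + j) * (c - d + j)) := fun j => by
    rw [one_sub_div (by positivity), inv_div]
    ring
  have hprod_pos : ∀ s : ℝ, 0 < s → 0 < ∏ j ∈ range (n + 1), (s + j) := fun s hs =>
    prod_pos fun j _ => by positivity
  have := hprod_pos _ h₁
  have := hprod_pos _ h₂
  have := hprod_pos c hc
  simp only [hfactor]
  rw [GammaSeq, GammaSeq, GammaSeq, prod_div_distrib, prod_mul_distrib, prod_pow]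
  field_simp
  linear_combination hrpow

lemma tendsto_prod_inv_one_sub_sq_div_sq (h₁ : 0 < c + d) (h₂ : 0 < c - d) :
    Tendsto (fun n => ∏ j ∈ range n, (1 - d ^ 2 / (c + j) ^ 2)⁻¹) atTop
      (𝓝 (Gamma (c + d) * Gamma (c - d) / Gamma c ^ 2)) := by
  have hc : Gamma c ≠ 0 := (Gamma_pos_of_pos (by linarith)).ne'
  have hlim := ((GammaSeq_tendsto_Gamma (c + d)).mul (GammaSeq_tendsto_Gamma (c - d))).div
    ((GammaSeq_tendsto_Gamma c).pow 2) (pow_ne_zero 2 hc)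
  refine (tendsto_add_atTop_iff_nat 1).1 (hlim.congr' ?_)
  filter_upwards [eventually_ne_atTop 0] with n hn
  exact GammaSeq_mul_GammaSeq_div_sq h₁ h₂ hn

lemma hasSum_neg_log_one_sub_sq_div_sq (h₁ : 0 < c + d) (h₂ : 0 < c - d) :
    HasSum (fun j : ℕ => -log (1 - d ^ 2 / (c + j) ^ 2))
      (log (Gamma (c + d) * Gamma (c - d) / Gamma c ^ 2)) := by
  have hG : 0 < Gamma (c + d) * Gamma (c - d) / Gamma c ^ 2 := by
    have := Gamma_pos_of_pos h₁
    have := Gamma_pos_of_pos h₂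
    have := Gamma_pos_of_pos (show 0 < c by linarith)
    positivity
  have hlt : ∀ j : ℕ, 0 < 1 - d ^ 2 / (c + j) ^ 2 := fun j =>
    sub_pos.2 (sq_div_add_sq_lt_one h₁ h₂ j.cast_nonneg)
  refine (hasSum_iff_tendsto_nat_of_nonneg (fun j => ?_) _).2 ?_
  · have : 0 ≤ d ^ 2 / (c + j) ^ 2 := by positivity
    exact neg_nonneg.2 (log_nonpos (hlt j).le (by linarith))
  · convert (continuousAt_log hG.ne').tendsto.comp (tendsto_prod_inv_one_sub_sq_div_sq h₁ h₂)
      using 2 with n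
    rw [Function.comp_apply, log_prod fun j _ => (inv_pos.2 (hlt j)).ne']
    simp only [log_inv]

lemma hasSum_log_Gamma_mul_Gamma_div_sq_sub_sum (h₁ : 0 < c + d) (h₂ : 0 < c - d) (n : ℕ) :
    HasSum
      (fun j : ℕ => -log (1 - d ^ 2 / (c + j) ^ 2) - ∑ k ∈ Icc 1 n, (d ^ 2 / (c + j) ^ 2) ^ k / k)
      (log (Gamma (c + d) * Gamma (c - d) / Gamma c ^ 2) -
        ∑ k ∈ Icc 1 n, 1 / k * d ^ (2 * k) * hurwitzZetaNat (2 * k) c) :=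
  (hasSum_neg_log_one_sub_sq_div_sq h₁ h₂).sub <| hasSum_sum fun k hk =>
    hasSum_pow_div_hurwitzZetaNat (by linarith) d (mem_Icc.1 hk).1

lemma neg_log_one_sub_sq_div_sq_sub_sum_le (h₁ : 0 < c + d) (h₂ : 0 < c - d) (j n : ℕ) :
    -log (1 - d ^ 2 / (c + j) ^ 2) - ∑ k ∈ Icc 1 n, (d ^ 2 / (c + j) ^ 2) ^ k / k ≤
      1 / (n + 1) * d ^ (2 * (n + 1)) * (1 / ((c + j) ^ 2 - d ^ 2) ^ (n + 1)) := by
  have hlt := sq_div_add_sq_lt_one h₁ h₂ j.cast_nonneg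
  have hq : 0 < (c + j) ^ 2 := pow_pos (by linarith [j.cast_nonneg (α := ℝ)]) 2
  have hp : 0 < (c + j) ^ 2 - d ^ 2 := sub_pos.2 ((div_lt_one hq).1 hlt)
  calc _ ≤ (d ^ 2 / (c + j) ^ 2) ^ (n + 1) / (n + 1) * (1 - d ^ 2 / (c + j) ^ 2)⁻¹ :=
        neg_log_one_sub_sub_sum_Icc_le (by positivity) hlt n
    _ = 1 / (n + 1) *
          ((d ^ 2 / (c + j) ^ 2) ^ (n + 1) / (((c + j) ^ 2 - d ^ 2) / (c + j) ^ 2)) := by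
        rw [one_sub_div hq.ne']
        ring
    _ ≤ 1 / (n + 1) * ((d ^ 2) ^ (n + 1) / ((c + j) ^ 2 - d ^ 2) ^ (n + 1)) := by
        gcongr 1 / (n + 1) * ?_
        exact div_pow_succ_div_div_le (by positivity) hp (sub_le_self _ (sq_nonneg d)) n
    _ = _ := by
        rw [← pow_mul]
        ring

end

end Real

open Real

theorem log_gurland_star_expansion (x y : ℝ) (hx : 0 < x) (hy : 0 < y) (m : ℕ) (hm : 2 ≤ m) :
    ∃ R : ℝ,
      Real.log (Real.Gamma (1 + x) * Real.Gamma (1 + y) /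
          (Real.Gamma (1 + (x + y) / 2)) ^ 2) =
        (∑ k ∈ Finset.Icc 1 (m - 1),
          (1 / (k : ℝ)) * ((x - y) / 2) ^ (2 * k) * hurwitzZetaNat (2 * k) (1 + (x + y) / 2)) + R ∧
      0 ≤ R ∧
      R ≤ (1 / (m : ℝ)) * ((x - y) / 2) ^ (2 * m) *
        ∑' n : ℕ, 1 / ((((n : ℝ) + 1) + x) ^ m * (((n : ℝ) + 1) + y) ^ m) := by
  obtain ⟨n, rfl⟩ : ∃ n, m = n + 1 := ⟨m - 1, by omega⟩
  rw [Nat.add_sub_cancel]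
  set c : ℝ := 1 + (x + y) / 2
  set d : ℝ := (x - y) / 2
  have hplus : c + d = 1 + x := by ring
  have hminus : c - d = 1 + y := by ring
  have h₁ : 0 < c + d := by linarith
  have h₂ : 0 < c - d := by linarith
  have hR := hasSum_log_Gamma_mul_Gamma_div_sq_sub_sum h₁ h₂ n
  rw [hplus, hminus] at hR
  have hbound := (summable_one_div_pow_mul_pow hx.le hy.le n.add_one_ne_zero).hasSum.mul_left
    (1 / ((n + 1 : ℕ) : ℝ) * d ^ (2 * (n + 1)))
  refine ⟨_, (add_sub_cancel _ _).symm, hR.nonneg fun j => ?_,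
    hasSum_le (fun j => ?_) hR hbound⟩
  · exact sub_nonneg.2 <| sum_Icc_pow_div_le_neg_log_one_sub (by positivity)
      (sq_div_add_sq_lt_one h₁ h₂ j.cast_nonneg) n
  · have hfactor : (c + j) ^ 2 - d ^ 2 = ((j : ℝ) + 1 + x) * ((j : ℝ) + 1 + y) := by ring
    refine (neg_log_one_sub_sq_div_sq_sub_sum_le h₁ h₂ j n).trans_eq ?_
    rw [hfactor, mul_pow]
    push_cast
    ring
end

section
/- Let x, y > 0 satisfy |x-y|/(2(1+√(xy))) < 1. Then for every integer m ≥ 2, 0 ≤ ln G⋆(x,y) − S_m(x,y) ≤ (1/m)(|x-y|/(2(1+√(xy))))^{2m} (1 + (1+√(xy))/(2m-1)), where S_m(x,y) = ∑_{k=1}^{m-1} (1/k)((x-y)/2)^{2k} ζ(2k, 1+(x+y)/2). -/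
open Finset Filter Topology Real

theorem sq_div_lt_one_of_abs_lt {d C : ℝ} (h : |d| < C) : (d / C) ^ 2 < 1 := by
  have hC : 0 < C := (abs_nonneg d).trans_lt h
  rwa [sq_lt_one_iff_abs_lt_one, abs_div, abs_of_pos hC, div_lt_one hC]

theorem GammaSeq_mul_GammaSeq_div_sq {c d : ℝ} (hd : |d| < c) {n : ℕ} (hn : n ≠ 0) :
    GammaSeq (c + d) n * GammaSeq (c - d) n / GammaSeq c n ^ 2 =
      ∏ j ∈ range (n + 1), (1 - (d / (j + c)) ^ 2)⁻¹ := by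
  obtain ⟨hdc, hcd⟩ := abs_lt.mp hd
  have hfactor (j : ℕ) :
      (1 - (d / (j + c)) ^ 2)⁻¹ = (c + j) ^ 2 / ((c + d + j) * (c - d + j)) := by
    have : (j : ℝ) + c ≠ 0 := by linarith [Nat.cast_nonneg (α := ℝ) j]
    have : c + (j : ℝ) ≠ 0 := by linarith [Nat.cast_nonneg (α := ℝ) j]
    rw [show 1 - (d / (j + c)) ^ 2 = (c + d + j) * (c - d + j) / (c + j) ^ 2 by
      field_simp; ring, inv_div]
  have hn' : (0 : ℝ) < n := by positivity
  have hpow : (n : ℝ) ^ (c + d) * (n : ℝ) ^ (c - d) = ((n : ℝ) ^ c) ^ 2 := by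
    rw [← rpow_add hn', sq, ← rpow_add hn']
    ring_nf
  have hprod (s : ℝ) (hs : 0 < s) : 0 < ∏ j ∈ range (n + 1), (s + j) :=
    prod_pos fun j _ => by positivity
  have := hprod (c + d) (by linarith)
  have := hprod (c - d) (by linarith)
  have := hprod c (by linarith)
  rw [prod_congr rfl fun j _ => hfactor j, prod_div_distrib, prod_mul_distrib, prod_pow]
  simp only [GammaSeq]
  rw [div_mul_div_comm, div_pow, mul_pow, ← hpow]
  field_simp

theorem hasSum_neg_log_one_sub_sq_div {c d : ℝ} (hd : |d| < c) :
    HasSum (fun j : ℕ => -log (1 - (d / (j + c)) ^ 2))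
      (log (Gamma (c + d) * Gamma (c - d) / Gamma c ^ 2)) := by
  obtain ⟨hdc, hcd⟩ := abs_lt.mp hd
  have hu (j : ℕ) : 0 < 1 - (d / (j + c)) ^ 2 :=
    sub_pos.2 (sq_div_lt_one_of_abs_lt (by linarith [Nat.cast_nonneg (α := ℝ) j]))
  have hG : 0 < Gamma (c + d) * Gamma (c - d) / Gamma c ^ 2 := by
    have := Gamma_pos_of_pos (show 0 < c + d by linarith)
    have := Gamma_pos_of_pos (show 0 < c - d by linarith)
    have := Gamma_pos_of_pos (show 0 < c by linarith)
    positivity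
  have hlim : Tendsto (fun n => GammaSeq (c + d) n * GammaSeq (c - d) n / GammaSeq c n ^ 2)
      atTop (𝓝 (Gamma (c + d) * Gamma (c - d) / Gamma c ^ 2)) :=
    ((GammaSeq_tendsto_Gamma _).mul (GammaSeq_tendsto_Gamma _)).div
      ((GammaSeq_tendsto_Gamma c).pow 2) (pow_pos (Gamma_pos_of_pos (by linarith)) 2).ne'
  have hnonneg (j : ℕ) : 0 ≤ -log (1 - (d / (j + c)) ^ 2) :=
    neg_nonneg.mpr (log_nonpos (hu j).le (by nlinarith))
  rw [hasSum_iff_tendsto_nat_of_nonneg hnonneg, ← tendsto_add_atTop_iff_nat 1]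
  refine ((continuousAt_log hG.ne').tendsto.comp hlim).congr' ?_
  filter_upwards [eventually_ne_atTop 0] with n hn
  rw [Function.comp_apply, GammaSeq_mul_GammaSeq_div_sq hd hn,
    log_prod fun j _ => (inv_pos.2 (hu j)).ne']
  simp only [log_inv]

theorem hasSum_neg_log_one_sub_sub_sum {t : ℝ} (ht : |t| < 1) (n : ℕ) :
    HasSum (fun k : ℕ => t ^ (k + n + 1) / (k + n + 1))
      (-log (1 - t) - ∑ k ∈ Icc 1 n, t ^ k / k) := by
  have hpartial : ∑ k ∈ range n, t ^ (k + 1) / (k + 1) = ∑ k ∈ Icc 1 n, t ^ k / k := by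
    rw [← Ico_add_one_right_eq_Icc, sum_Ico_eq_sum_range, Nat.add_sub_cancel]
    refine sum_congr rfl fun k _ => ?_
    push_cast
    ring_nf
  rw [← hpartial]
  exact_mod_cast (hasSum_nat_add_iff' n).mpr (hasSum_pow_div_log_of_abs_lt_one ht)

theorem neg_log_one_sub_sub_sum_nonneg {t : ℝ} (ht0 : 0 ≤ t) (ht1 : t < 1) (n : ℕ) :
    0 ≤ -log (1 - t) - ∑ k ∈ Icc 1 n, t ^ k / k :=
  (hasSum_neg_log_one_sub_sub_sum (abs_lt.2 ⟨by linarith, ht1⟩) n).nonneg fun k => by positivity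

theorem neg_log_one_sub_sub_sum_le {t : ℝ} (ht0 : 0 ≤ t) (ht1 : t < 1) (n : ℕ) :
    -log (1 - t) - ∑ k ∈ Icc 1 n, t ^ k / k ≤ t ^ (n + 1) / ((n + 1) * (1 - t)) := by
  have hgeom : HasSum (fun k : ℕ => t ^ (n + 1) / (n + 1) * t ^ k)
      (t ^ (n + 1) / (n + 1) * (1 - t)⁻¹) :=
    (hasSum_geometric_of_lt_one ht0 ht1).mul_left _
  have hterm (k : ℕ) : t ^ (k + n + 1) / (k + n + 1) ≤ t ^ (n + 1) / (n + 1) * t ^ k := by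
    rw [div_mul_eq_mul_div, ← pow_add, show n + 1 + k = k + n + 1 by ring]
    gcongr
    linarith [Nat.cast_nonneg (α := ℝ) k]
  refine (hasSum_le hterm (hasSum_neg_log_one_sub_sub_sum (abs_lt.2 ⟨by linarith, ht1⟩) n)
    hgeom).trans_eq ?_
  have : 1 - t ≠ 0 := by linarith
  field_simp

theorem sq_div_pow_succ_div_one_sub_le {d A C : ℝ} (hA : 0 < A) (hAC : A ≤ C)
    (hAd : A ^ 2 ≤ C ^ 2 - d ^ 2) (n : ℕ) :
    ((d / C) ^ 2) ^ (n + 1) / (1 - (d / C) ^ 2) ≤ ((d / A) ^ 2) ^ (n + 1) := by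
  have hC : 0 < C := hA.trans_le hAC
  have hle : (d / C) ^ 2 ≤ (d / A) ^ 2 := by
    rw [div_pow, div_pow]
    gcongr
  have hratio : (d / C) ^ 2 / (1 - (d / C) ^ 2) ≤ (d / A) ^ 2 := by
    rw [div_pow, div_pow, one_sub_div (by positivity), div_div_div_cancel_right₀ (by positivity)]
    gcongr
  calc ((d / C) ^ 2) ^ (n + 1) / (1 - (d / C) ^ 2)
      = ((d / C) ^ 2) ^ n * ((d / C) ^ 2 / (1 - (d / C) ^ 2)) := by ring
    _ ≤ ((d / A) ^ 2) ^ n * (d / A) ^ 2 := by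
        have h1 : 0 < 1 - (d / C) ^ 2 := by
          rw [div_pow, sub_pos, div_lt_one (by positivity)]
          nlinarith
        exact mul_le_mul (pow_le_pow_left₀ (by positivity) hle n) hratio
          (div_nonneg (by positivity) h1.le) (by positivity)
    _ = ((d / A) ^ 2) ^ (n + 1) := by ring

theorem neg_log_one_sub_sq_div_sub_sum_le {d A C : ℝ} (hA : 0 < A) (hAC : A ≤ C)
    (hAd : A ^ 2 ≤ C ^ 2 - d ^ 2) (n : ℕ) :
    -log (1 - (d / C) ^ 2) - ∑ k ∈ Icc 1 n, ((d / C) ^ 2) ^ k / k ≤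
      ((d / A) ^ 2) ^ (n + 1) / (n + 1) := by
  have hC : 0 < C := hA.trans_le hAC
  have hdC : (d / C) ^ 2 < 1 := by
    rw [div_pow, div_lt_one (by positivity)]
    nlinarith
  calc _ ≤ ((d / C) ^ 2) ^ (n + 1) / ((n + 1) * (1 - (d / C) ^ 2)) :=
        neg_log_one_sub_sub_sum_le (sq_nonneg _) hdC n
    _ = ((d / C) ^ 2) ^ (n + 1) / (1 - (d / C) ^ 2) / (n + 1) := by rw [div_div, mul_comm]
    _ ≤ ((d / A) ^ 2) ^ (n + 1) / (n + 1) := by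
        gcongr
        exact sq_div_pow_succ_div_one_sub_le hA hAC hAd n

theorem nat_div_pow_succ_le_one_div_pow_sub {b : ℝ} (hb : 0 < b) (q : ℕ) :
    q / (b + 1) ^ (q + 1) ≤ 1 / b ^ q - 1 / (b + 1) ^ q := by
  have hbern : b ^ q * (b + q) ≤ b * (b + 1) ^ q :=
    calc b ^ q * (b + q) = b * b ^ q * (1 + q * (1 / b)) := by field_simp
      _ ≤ b * b ^ q * (1 + 1 / b) ^ q := by
          gcongr
          exact one_add_mul_le_pow (by linarith [one_div_pos.2 hb]) q
      _ = b * (b + 1) ^ q := by rw [mul_assoc, ← mul_pow, mul_one_add, mul_one_div_cancel hb.ne']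
  have hmono : b ^ q ≤ (b + 1) ^ q := by gcongr; linarith
  have hkey : q * b ^ q ≤ ((b + 1) ^ q - b ^ q) * (b + 1) := by nlinarith
  rw [div_sub_div _ _ (by positivity) (by positivity),
    div_le_div_iff₀ (by positivity) (by positivity), pow_succ]
  nlinarith [mul_le_mul_of_nonneg_left hkey (by positivity : (0 : ℝ) ≤ (b + 1) ^ q)]

theorem summable_one_div_nat_add_pow {a : ℝ} (ha : 0 < a) {s : ℕ} (hs : 2 ≤ s) :
    Summable fun j : ℕ => 1 / ((j : ℝ) + a) ^ s := by
  have := (Real.summable_one_div_nat_add_rpow a s).2 (by exact_mod_cast hs)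
  refine this.congr fun j => ?_
  rw [abs_of_pos (by positivity), rpow_natCast]

theorem hasSum_div_nat_add_pow (d : ℝ) {a : ℝ} (ha : 0 < a) {s : ℕ} (hs : 2 ≤ s) :
    HasSum (fun j : ℕ => (d / (j + a)) ^ s) (d ^ s * hurwitzZetaNat s a) := by
  simpa only [div_pow, mul_one_div, hurwitzZetaNat] using
    ((summable_one_div_nat_add_pow ha hs).hasSum.mul_left (d ^ s))

theorem hurwitzZetaNat_le {a : ℝ} (ha : 0 < a) {s : ℕ} (hs : 2 ≤ s) :
    hurwitzZetaNat s a ≤ (1 + a / (s - 1)) / a ^ s := by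
  obtain ⟨q, rfl⟩ : ∃ q, s = q + 1 := ⟨s - 1, by omega⟩
  have hq : (0 : ℝ) < q := by norm_cast; omega
  have htel (n : ℕ) :
      ∑ j ∈ range n, 1 / (((j + 1 : ℕ) : ℝ) + a) ^ (q + 1) ≤ 1 / (q * a ^ q) := by
    calc ∑ j ∈ range n, 1 / (((j + 1 : ℕ) : ℝ) + a) ^ (q + 1)
        ≤ ∑ j ∈ range n,
            (1 / ((j : ℝ) + a) ^ q - 1 / (((j + 1 : ℕ) : ℝ) + a) ^ q) / q := by
          refine sum_le_sum fun j _ => ?_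
          rw [le_div_iff₀ hq, mul_comm, ← mul_div_assoc, mul_one]
          have := nat_div_pow_succ_le_one_div_pow_sub (b := j + a) (by positivity) q
          push_cast
          rwa [show (j : ℝ) + 1 + a = j + a + 1 by ring]
      _ = (1 / a ^ q - 1 / ((n : ℝ) + a) ^ q) / q := by
          rw [← sum_div, sum_range_sub' (fun j : ℕ => 1 / ((j : ℝ) + a) ^ q)]
          simp
      _ ≤ 1 / (q * a ^ q) := by
          rw [mul_comm, ← div_div]
          gcongr
          exact sub_le_self _ (by positivity)
  have htail := Real.tsum_le_of_sum_range_le (fun j => by positivity) htel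
  rw [hurwitzZetaNat, (summable_one_div_nat_add_pow ha hs).tsum_eq_zero_add]
  simp only [CharP.cast_eq_zero, zero_add, Nat.cast_add_one, add_sub_cancel_right] at htail ⊢
  calc 1 / a ^ (q + 1) + ∑' j : ℕ, 1 / (((j : ℝ) + 1) + a) ^ (q + 1)
      ≤ 1 / a ^ (q + 1) + 1 / (q * a ^ q) := by gcongr
    _ = (1 + a / q) / a ^ (q + 1) := by
        field_simp
        ring

/-- `S_{n+1}(x, y)` in the variables `c = 1 + (x + y) / 2`, `d = (x - y) / 2`. -/
noncomputable def gurlandPartialSum (c d : ℝ) (n : ℕ) : ℝ :=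
  ∑ k ∈ Icc 1 n, 1 / (k : ℝ) * d ^ (2 * k) * hurwitzZetaNat (2 * k) c

theorem hasSum_log_Gamma_ratio_sub_gurlandPartialSum {c d : ℝ} (hd : |d| < c) (n : ℕ) :
    HasSum (fun j : ℕ =>
        -log (1 - (d / (j + c)) ^ 2) - ∑ k ∈ Icc 1 n, ((d / (j + c)) ^ 2) ^ k / k)
      (log (Gamma (c + d) * Gamma (c - d) / Gamma c ^ 2) - gurlandPartialSum c d n) := by
  have hc : 0 < c := (abs_nonneg d).trans_lt hd
  refine (hasSum_neg_log_one_sub_sq_div hd).sub (hasSum_sum fun k hk => ?_)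
  simp only [← pow_mul]
  rw [one_div_mul_eq_div, div_mul_eq_mul_div]
  exact (hasSum_div_nat_add_pow d hc (by simp at hk; omega)).div_const (k : ℝ)

theorem log_Gamma_ratio_sub_gurlandPartialSum_nonneg {c d : ℝ} (hd : |d| < c) (n : ℕ) :
    0 ≤ log (Gamma (c + d) * Gamma (c - d) / Gamma c ^ 2) - gurlandPartialSum c d n :=
  (hasSum_log_Gamma_ratio_sub_gurlandPartialSum hd n).nonneg fun j =>
    neg_log_one_sub_sub_sum_nonneg (sq_nonneg _)
      (sq_div_lt_one_of_abs_lt (by linarith [abs_nonneg d, Nat.cast_nonneg (α := ℝ) j])) n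

theorem log_Gamma_ratio_sub_gurlandPartialSum_le {a c d : ℝ} (ha : 0 < a) (hac : a ≤ c)
    (had : a ^ 2 ≤ c ^ 2 - d ^ 2) {m : ℕ} (hm : m ≠ 0) :
    log (Gamma (c + d) * Gamma (c - d) / Gamma c ^ 2) - gurlandPartialSum c d (m - 1) ≤
      1 / (m : ℝ) * (|d| / a) ^ (2 * m) * (1 + a / (2 * (m : ℝ) - 1)) := by
  have hd : |d| < c := abs_lt_of_sq_lt_sq (by nlinarith) (by linarith)
  have hB := (hasSum_div_nat_add_pow d ha (s := 2 * m) (by omega)).div_const (m : ℝ)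
  obtain ⟨n, rfl⟩ : ∃ n, m = n + 1 := ⟨m - 1, by omega⟩
  rw [Nat.add_sub_cancel]
  have hterm (j : ℕ) :
      -log (1 - (d / (j + c)) ^ 2) - ∑ k ∈ Icc 1 n, ((d / (j + c)) ^ 2) ^ k / k ≤
        (d / (j + a)) ^ (2 * (n + 1)) / (n + 1) := by
    rw [pow_mul]
    exact neg_log_one_sub_sq_div_sub_sum_le (by positivity) (by linarith)
      (by nlinarith [Nat.cast_nonneg (α := ℝ) j]) n
  push_cast at hB ⊢
  calc _ ≤ d ^ (2 * (n + 1)) * hurwitzZetaNat (2 * (n + 1)) a / (n + 1) :=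
        hasSum_le hterm (hasSum_log_Gamma_ratio_sub_gurlandPartialSum hd n) hB
    _ ≤ d ^ (2 * (n + 1)) * ((1 + a / (2 * ((n : ℝ) + 1) - 1)) / a ^ (2 * (n + 1))) /
          (n + 1) := by
        have := hurwitzZetaNat_le ha (s := 2 * (n + 1)) (by omega)
        push_cast at this
        gcongr
        exact (even_two_mul _).pow_nonneg d
    _ = _ := by
        rw [div_pow, (even_two_mul _).pow_abs]
        ring

theorem log_gurland_star_partial_sum_bound_general (x y : ℝ) (hx : 0 < x) (hy : 0 < y)
    (m : ℕ) (hm : 2 ≤ m) :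
    0 ≤ Real.log (Real.Gamma (1 + x) * Real.Gamma (1 + y) /
          (Real.Gamma (1 + (x + y) / 2)) ^ 2) -
        (∑ k ∈ Finset.Icc 1 (m - 1),
          (1 / (k : ℝ)) * ((x - y) / 2) ^ (2 * k) *
            hurwitzZetaNat (2 * k) (1 + (x + y) / 2)) ∧
    Real.log (Real.Gamma (1 + x) * Real.Gamma (1 + y) /
          (Real.Gamma (1 + (x + y) / 2)) ^ 2) -
        (∑ k ∈ Finset.Icc 1 (m - 1),
          (1 / (k : ℝ)) * ((x - y) / 2) ^ (2 * k) *
            hurwitzZetaNat (2 * k) (1 + (x + y) / 2)) ≤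
      (1 / (m : ℝ)) * (|x - y| / (2 * (1 + Real.sqrt (x * y)))) ^ (2 * m) *
        (1 + (1 + Real.sqrt (x * y)) / (2 * (m : ℝ) - 1)) := by
  have hxy : 0 ≤ x * y := by positivity
  have hamgm : √(x * y) ≤ (x + y) / 2 := by
    nlinarith [sq_sqrt hxy, sqrt_nonneg (x * y), sq_nonneg (x - y)]
  have had : (1 + √(x * y)) ^ 2 ≤ (1 + (x + y) / 2) ^ 2 - ((x - y) / 2) ^ 2 := by
    nlinarith [sq_sqrt hxy]
  rw [show 1 + x = 1 + (x + y) / 2 + (x - y) / 2 by ring,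
    show 1 + y = 1 + (x + y) / 2 - (x - y) / 2 by ring,
    show |x - y| / (2 * (1 + √(x * y))) = |(x - y) / 2| / (1 + √(x * y)) by
      rw [abs_div, abs_two, div_div]]
  exact ⟨log_Gamma_ratio_sub_gurlandPartialSum_nonneg (abs_lt.2 ⟨by linarith, by linarith⟩) _,
    log_Gamma_ratio_sub_gurlandPartialSum_le (by positivity) (by linarith) had (by omega)⟩

theorem log_gurland_star_partial_sum_bound (x y : ℝ) (hx : 0 < x) (hy : 0 < y)
    (hQ : |x - y| / (2 * (1 + Real.sqrt (x * y))) < 1) (m : ℕ) (hm : 2 ≤ m) :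
    0 ≤ Real.log (Real.Gamma (1 + x) * Real.Gamma (1 + y) /
          (Real.Gamma (1 + (x + y) / 2)) ^ 2) -
        (∑ k ∈ Finset.Icc 1 (m - 1),
          (1 / (k : ℝ)) * ((x - y) / 2) ^ (2 * k) *
            hurwitzZetaNat (2 * k) (1 + (x + y) / 2)) ∧
    Real.log (Real.Gamma (1 + x) * Real.Gamma (1 + y) /
          (Real.Gamma (1 + (x + y) / 2)) ^ 2) -
        (∑ k ∈ Finset.Icc 1 (m - 1),
          (1 / (k : ℝ)) * ((x - y) / 2) ^ (2 * k) *
            hurwitzZetaNat (2 * k) (1 + (x + y) / 2)) ≤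
      (1 / (m : ℝ)) * (|x - y| / (2 * (1 + Real.sqrt (x * y)))) ^ (2 * m) *
        (1 + (1 + Real.sqrt (x * y)) / (2 * (m : ℝ) - 1)) :=
  log_gurland_star_partial_sum_bound_general x y hx hy m hm
end
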